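/- arXiv:1403.6539 — 3 statements merged into one kernel-verified Lean document; each statement's English description precedes it below -/
import Mathlib

section
/- If β = 0, then the down-up algebra A(α,0,φ) over K[t₁,…,tₙ] is not a domain: the nonzero elements d and du − α ud − φ satisfy d·(du − α ud − φ) = 0. -/
open MvPolynomial

namespace DownUp

inductive Gen | u | d

variable {K : Type} [Field K] {n : ℕ}

/-- Free algebra over the polynomial base ring on generators u, d. -/
abbrev F (K : Type) [Field K] (n : ℕ) := FreeAlgebra (MvPolynomial (Fin n) K) Gen

noncomputable def uF : F K n := FreeAlgebra.ι _ Gen.u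
noncomputable def dF : F K n := FreeAlgebra.ι _ Gen.d

/-- The defining relations of the down-up algebra over K[t₁,…,tₙ]. -/
inductive Rel (α β : K) (φ : MvPolynomial (Fin n) K) : F K n → F K n → Prop
  | ddu : Rel α β φ (dF * dF * uF)
      (α • (dF * uF * dF) + β • (uF * dF * dF) + algebraMap _ _ φ * dF)
  | duu : Rel α β φ (dF * uF * uF)
      (α • (uF * dF * uF) + β • (uF * uF * dF) + uF * algebraMap _ _ φ)

/-- The down-up algebra A(α,β,φ) over K[t₁,…,tₙ]. -/
abbrev A (α β : K) (φ : MvPolynomial (Fin n) K) := RingQuot (Rel α β φ)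

noncomputable def U (α β : K) (φ : MvPolynomial (Fin n) K) : A α β φ :=
  RingQuot.mkAlgHom K _ uF
noncomputable def D (α β : K) (φ : MvPolynomial (Fin n) K) : A α β φ :=
  RingQuot.mkAlgHom K _ dF

/-- Image of the base polynomial ring in A. -/
noncomputable def T (α β : K) (φ : MvPolynomial (Fin n) K) :
    MvPolynomial (Fin n) K →ₐ[K] A α β φ :=
  (RingQuot.mkAlgHom K (Rel α β φ)).comp (IsScalarTower.toAlgHom K (MvPolynomial (Fin n) K) (F K n))

end DownUp

namespace DownUpProof

variable {K : Type} [Field K] {n : ℕ}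

/-- The weight sequence for the representation:  μ₀ = φ + 1,  μ_{m+1} = α μ_m + φ. -/
noncomputable def mu (α : K) (φ : MvPolynomial (Fin n) K) : ℕ → MvPolynomial (Fin n) K
  | 0 => φ + 1
  | m + 1 => algebraMap K _ α * mu α φ m + φ

/-- The down-shift operator on `ℕ →₀ R`. -/
noncomputable def Dop : Module.End (MvPolynomial (Fin n) K) (ℕ →₀ MvPolynomial (Fin n) K) :=
  Finsupp.lsum ℕ fun m => match m with | 0 => 0 | m + 1 => Finsupp.lsingle m

/-- The weighted up-shift operator on `ℕ →₀ R`. -/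
noncomputable def Uop (α : K) (φ : MvPolynomial (Fin n) K) :
    Module.End (MvPolynomial (Fin n) K) (ℕ →₀ MvPolynomial (Fin n) K) :=
  Finsupp.lsum ℕ fun m => mu α φ m • Finsupp.lsingle (m + 1)

@[simp] lemma Dop_single0 (r : MvPolynomial (Fin n) K) :
    Dop (Finsupp.single 0 r) = 0 := by
  simp [Dop]

@[simp] lemma Dop_singleS (m : ℕ) (r : MvPolynomial (Fin n) K) :
    Dop (Finsupp.single (m + 1) r) = Finsupp.single m r := by
  simp [Dop]

@[simp] lemma Uop_single (α : K) (φ : MvPolynomial (Fin n) K) (m : ℕ) (r : MvPolynomial (Fin n) K) :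
    Uop α φ (Finsupp.single m r) = Finsupp.single (m + 1) (mu α φ m * r) := by
  simp [Uop, Finsupp.smul_single, smul_eq_mul]

lemma key1 (α : K) (φ : MvPolynomial (Fin n) K) :
    Dop * Dop * Uop α φ =
      α • (Dop * Uop α φ * Dop) + algebraMap (MvPolynomial (Fin n) K) _ φ * Dop := by
  refine Finsupp.lhom_ext fun m r => ?_
  cases m with
  | zero =>
      simp only [Module.End.mul_apply, LinearMap.add_apply, LinearMap.smul_apply,
        Uop_single, Dop_single0, Dop_singleS, Module.algebraMap_end_apply,
        Finsupp.smul_single, map_zero, smul_zero, add_zero, zero_add]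
  | succ m =>
      simp only [Module.End.mul_apply, LinearMap.add_apply, LinearMap.smul_apply,
        Uop_single, Dop_singleS, Module.algebraMap_end_apply, Finsupp.smul_single,
        smul_eq_mul, ← Finsupp.single_add]
      congr 1
      rw [mu, Algebra.smul_def]
      ring

lemma key2 (α : K) (φ : MvPolynomial (Fin n) K) :
    Dop * Uop α φ * Uop α φ =
      α • (Uop α φ * Dop * Uop α φ) + Uop α φ * algebraMap (MvPolynomial (Fin n) K) _ φ := by
  refine Finsupp.lhom_ext fun m r => ?_
  simp only [Module.End.mul_apply, LinearMap.add_apply, LinearMap.smul_apply,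
    Uop_single, Dop_singleS, Module.algebraMap_end_apply, Finsupp.smul_single,
    smul_eq_mul, ← Finsupp.single_add]
  congr 1
  rw [mu, Algebra.smul_def]
  ring

open DownUp

/-- The representation of the free algebra. -/
noncomputable def f (α : K) (φ : MvPolynomial (Fin n) K) :
    F K n →ₐ[K] Module.End (MvPolynomial (Fin n) K) (ℕ →₀ MvPolynomial (Fin n) K) :=
  ((FreeAlgebra.lift (MvPolynomial (Fin n) K))
    (fun g => match g with | Gen.u => Uop α φ | Gen.d => Dop)).restrictScalars K

@[simp] lemma f_u (α : K) (φ : MvPolynomial (Fin n) K) : f α φ uF = Uop α φ := by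
  simp [f, uF]

@[simp] lemma f_d (α : K) (φ : MvPolynomial (Fin n) K) : f α φ dF = Dop := by
  simp [f, dF]

@[simp] lemma f_alg (α : K) (φ ψ : MvPolynomial (Fin n) K) :
    f α φ (algebraMap (MvPolynomial (Fin n) K) (F K n) ψ) =
      algebraMap (MvPolynomial (Fin n) K) _ ψ :=
  AlgHom.commutes _ ψ

set_option synthInstance.maxHeartbeats 1000000 in
lemma f_rel (α : K) (φ : MvPolynomial (Fin n) K) :
    ∀ ⦃x y : F K n⦄, Rel α 0 φ x y → f α φ x = f α φ y := by
  intro x y h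
  cases h with
  | ddu =>
      simp only [map_add, map_mul, map_smul, f_u, f_d, f_alg, zero_smul, add_zero]
      exact key1 α φ
  | duu =>
      simp only [map_add, map_mul, map_smul, f_u, f_d, f_alg, zero_smul, add_zero]
      exact key2 α φ

/-- The representation of the down-up algebra. -/
noncomputable def rho (α : K) (φ : MvPolynomial (Fin n) K) :
    A α 0 φ →ₐ[K] Module.End (MvPolynomial (Fin n) K) (ℕ →₀ MvPolynomial (Fin n) K) :=
  RingQuot.liftAlgHom K ⟨f α φ, f_rel α φ⟩

@[simp] lemma rho_D (α : K) (φ : MvPolynomial (Fin n) K) : rho α φ (D α 0 φ) = Dop := by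
  rw [D, rho, RingQuot.liftAlgHom_mkAlgHom_apply, f_d]

@[simp] lemma rho_U (α : K) (φ : MvPolynomial (Fin n) K) : rho α φ (U α 0 φ) = Uop α φ := by
  rw [U, rho, RingQuot.liftAlgHom_mkAlgHom_apply, f_u]

@[simp] lemma rho_T (α : K) (φ : MvPolynomial (Fin n) K) :
    rho α φ (T α 0 φ φ) = algebraMap (MvPolynomial (Fin n) K) _ φ := by
  rw [T, AlgHom.comp_apply, IsScalarTower.coe_toAlgHom', rho,
    RingQuot.liftAlgHom_mkAlgHom_apply, f_alg]

lemma T_eq (α β : K) (φ : MvPolynomial (Fin n) K) :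
    T α β φ φ = RingQuot.mkAlgHom K (Rel α β φ) (algebraMap (MvPolynomial (Fin n) K) (F K n) φ) := by
  rw [T, AlgHom.comp_apply, IsScalarTower.coe_toAlgHom']

end DownUpProof

open DownUp in
/-- If β = 0, the down-up algebra A(α,0,φ) is not a domain: the nonzero
elements d and du − α·ud − φ multiply to zero. -/
theorem downUp_beta_zero_not_domain {K : Type} [Field K] {n : ℕ}
    (α : K) (φ : MvPolynomial (Fin n) K) :
    D α 0 φ * (D α 0 φ * U α 0 φ - α • (U α 0 φ * D α 0 φ) - T α 0 φ φ) = 0 ∧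
    D α 0 φ ≠ 0 ∧
    D α 0 φ * U α 0 φ - α • (U α 0 φ * D α 0 φ) - T α 0 φ φ ≠ 0 := by
  open DownUpProof in
  refine ⟨?_, ?_, ?_⟩
  · have hmk := RingQuot.mkAlgHom_rel K (DownUp.Rel.ddu (α := α) (β := (0 : K)) (φ := φ))
    simp only [map_add, map_mul, map_smul, zero_smul, add_zero] at hmk
    have hmk' : D α 0 φ * D α 0 φ * U α 0 φ =
        α • (D α 0 φ * U α 0 φ * D α 0 φ) + T α 0 φ φ * D α 0 φ := by
      rw [T_eq]; exact hmk
    have hcomm : D α 0 φ * T α 0 φ φ = T α 0 φ φ * D α 0 φ := by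
      rw [T_eq, D, ← map_mul, ← map_mul, Algebra.commutes]
    have e1 : ∀ x y z : A α 0 φ, x * (y - z) = x * y - x * z := fun x y z => mul_sub x y z
    have e2 : ∀ x y : A α 0 φ, x * (α • y) = α • (x * y) := fun x y => mul_smul_comm α x y
    have e4 : ∀ x y z : A α 0 φ, x * (y * z) = x * y * z := fun x y z => (mul_assoc x y z).symm
    have e3 : ∀ a b : A α 0 φ, (a + b) - a - b = 0 :=
      fun a b => sub_eq_zero.mpr (add_sub_cancel_left a b)
    rw [e1, e1, e2, hcomm, e4, e4, hmk']
    exact e3 _ _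
  · intro h
    have h2 : Dop (Finsupp.single 1 (1 : MvPolynomial (Fin n) K)) = 0 := by
      rw [← rho_D α φ, h, map_zero]; rfl
    rw [show (1 : ℕ) = 0 + 1 from rfl, Dop_singleS] at h2
    exact one_ne_zero (Finsupp.single_eq_zero.mp h2)
  · intro h
    have hz : rho α φ (D α 0 φ * U α 0 φ - α • (U α 0 φ * D α 0 φ) - T α 0 φ φ)
        = Dop * Uop α φ - α • (Uop α φ * Dop)
          - algebraMap (MvPolynomial (Fin n) K) _ φ := by
      have m1 := map_sub (rho α φ) (D α 0 φ * U α 0 φ - α • (U α 0 φ * D α 0 φ)) (T α 0 φ φ)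
      have m2 := map_sub (rho α φ) (D α 0 φ * U α 0 φ) (α • (U α 0 φ * D α 0 φ))
      have m3 := map_mul (rho α φ) (D α 0 φ) (U α 0 φ)
      have m4 := map_smul (rho α φ) α (U α 0 φ * D α 0 φ)
      have m5 := map_mul (rho α φ) (U α 0 φ) (D α 0 φ)
      rw [m1, m2, m3, m4, m5, rho_D, rho_U, rho_T]
    rw [h, map_zero] at hz
    have h3 := congrFun (congrArg DFunLike.coe hz.symm)
      (Finsupp.single 0 (1 : MvPolynomial (Fin n) K))
    simp only [LinearMap.sub_apply, Module.End.mul_apply, LinearMap.smul_apply,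
      Uop_single, Dop_single0, Dop_singleS, Module.algebraMap_end_apply,
      map_zero, smul_zero, LinearMap.zero_apply, mul_one] at h3
    rw [show mu α φ 0 = φ + 1 from rfl] at h3
    have h4 : Finsupp.single (0 : ℕ) (1 : MvPolynomial (Fin n) K) = 0 := by
      rw [show Finsupp.single (0:ℕ) (1 : MvPolynomial (Fin n) K)
            = Finsupp.single 0 (φ + 1) - 0 - φ • Finsupp.single (0:ℕ) (1 : MvPolynomial (Fin n) K) by
          rw [Finsupp.smul_single, smul_eq_mul, mul_one, sub_zero, ← Finsupp.single_sub]
          congr 1; ring]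
      exact h3
    exact one_ne_zero (Finsupp.single_eq_zero.mp h4)
end

section
/- If β ≠ 0, the multiplicative set D = {dⁱ : i ≥ 0} is a left and right Ore set in the down-up algebra A(α,β,φ). -/
open MvPolynomial

section OreAux

variable {K : Type} [Field K] {R : Type} [Ring R] [Algebra K R]

lemma dpow_comm (d : R) : ∀ m : ℕ, d * d ^ m = d ^ m * d := fun m => by
  rw [← pow_succ, ← pow_succ']

lemma dpow_comm' (d : R) : ∀ (m : ℕ) (x : R), d * (d ^ m * x) = d ^ m * (d * x) :=
  fun m x => by rw [← mul_assoc, dpow_comm, mul_assoc]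

lemma ore_aux (α β : K) (hβ : β ≠ 0) (u d t : R)
    (hrel : d * d * u = α • (d * u * d) + β • (u * d * d) + t * d)
    (htd : t * d = d * t) :
    (∀ i, ∃ (b : R) (j : ℕ), u * d ^ j = d ^ i * b) ∧
    (∀ i, ∃ (c : R) (k : ℕ), d ^ k * u = c * d ^ i) := by
  have htd' : ∀ m : ℕ, t * d ^ m = d ^ m * t := by
    intro m
    induction m with
    | zero => simp
    | succ m ihm => rw [pow_succ, ← mul_assoc, ihm, mul_assoc, htd, ← mul_assoc]
  have h1 : β • (u * d * d) = d * d * u - α • (d * u * d) - t * d := by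
    rw [hrel]; abel
  constructor
  · intro i
    induction i with
    | zero => exact ⟨u, 0, by simp⟩
    | succ i ih =>
      obtain ⟨b, j, hb⟩ := ih
      refine ⟨β⁻¹ • (d * (b * d ^ i) - α • (b * d ^ (i+1)) - d ^ j * t), 2 + (j + i), ?_⟩
      have e2 : u * d ^ (j + i) = d ^ i * (b * d ^ i) := by
        rw [pow_add, ← mul_assoc, hb, mul_assoc]
      have key : β • (u * d ^ (2 + (j + i))) =
          d ^ (i+1) * (d * (b * d ^ i) - α • (b * d ^ (i+1)) - d ^ j * t) := by
        have e : u * d ^ (2 + (j + i)) = (u * d * d) * d ^ (j + i) := by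
          rw [pow_add, pow_two]; noncomm_ring
        rw [e, ← smul_mul_assoc, h1, sub_mul, sub_mul, smul_mul_assoc]
        have hT1 : d * d * u * d ^ (j + i) = d ^ (i+1) * (d * (b * d ^ i)) := by
          rw [mul_assoc (d*d) u, e2]
          simp only [pow_succ, mul_assoc, dpow_comm, dpow_comm']
        have hT2 : d * u * d * d ^ (j + i) = d ^ (i+1) * (b * d ^ (i+1)) := by
          rw [mul_assoc (d*u) d, dpow_comm, ← mul_assoc, mul_assoc d u, e2]
          simp only [pow_succ, mul_assoc, dpow_comm, dpow_comm']
        have hT3 : t * d * d ^ (j + i) = d ^ (i+1) * (d ^ j * t) := by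
          rw [mul_assoc, ← pow_succ', htd']
          have hx : (j + i) + 1 = (i + 1) + j := by omega
          rw [hx, pow_add, mul_assoc]
        rw [hT1, hT2, hT3, mul_sub, mul_sub, mul_smul_comm]
      rw [← inv_smul_smul₀ hβ (u * d ^ (2 + (j + i))), key, mul_smul_comm]
  · intro i
    induction i with
    | zero => exact ⟨u, 0, by simp⟩
    | succ i ih =>
      obtain ⟨c, k, hc⟩ := ih
      refine ⟨α • (d ^ (i+1) * c) + β • (d ^ i * c * d) + t * d ^ k, (k + i) + 2, ?_⟩
      have e2 : d ^ (k + i) * u = d ^ i * (c * d ^ i) := by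
        rw [add_comm k i, pow_add, mul_assoc, hc]
      have e : d ^ ((k + i) + 2) * u = d ^ (k + i) * (d * d * u) := by
        rw [pow_add, pow_two]; noncomm_ring
      rw [e, hrel]
      have hsplit : d ^ ((k + i) + 1) = d ^ (i+1) * d ^ k := by
        rw [← pow_add]; congr 1; omega
      have hT1 : d ^ (k + i) * (α • (d * u * d)) = (α • (d ^ (i+1) * c)) * d ^ (i+1) := by
        rw [mul_smul_comm, smul_mul_assoc]
        congr 1
        rw [← mul_assoc, ← mul_assoc, ← pow_succ, hsplit, mul_assoc (d ^ (i+1)), hc]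
        simp only [pow_succ, mul_assoc]
      have hT2 : d ^ (k + i) * (β • (u * d * d)) = (β • (d ^ i * c * d)) * d ^ (i+1) := by
        rw [mul_smul_comm, smul_mul_assoc]
        congr 1
        rw [← mul_assoc, ← mul_assoc, e2]
        simp only [pow_succ, mul_assoc, dpow_comm, dpow_comm']
      have hT3 : d ^ (k + i) * (t * d) = (t * d ^ k) * d ^ (i+1) := by
        rw [← mul_assoc, ← htd', mul_assoc, ← pow_succ, mul_assoc, ← pow_add]
        have hx : (k + i) + 1 = k + (i + 1) := by omega
        rw [hx]
      rw [mul_add, mul_add, hT1, hT2, hT3, ← add_mul, ← add_mul]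

end OreAux

section DownUpOre
open DownUp

variable {K : Type} [Field K] {n : ℕ} (α β : K) (φ : MvPolynomial (Fin n) K)

lemma T_apply (p : MvPolynomial (Fin n) K) :
    T α β φ p = RingQuot.mkAlgHom K (Rel α β φ) (algebraMap _ _ p) := rfl

lemma T_central (p : MvPolynomial (Fin n) K) (x : A α β φ) :
    T α β φ p * x = x * T α β φ p := by
  obtain ⟨a, rfl⟩ := RingQuot.mkAlgHom_surjective K (Rel α β φ) x
  rw [T_apply, ← map_mul, ← map_mul, Algebra.commutes]

lemma relA :
    D α β φ * D α β φ * U α β φ =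
      α • (D α β φ * U α β φ * D α β φ) + β • (U α β φ * D α β φ * D α β φ)
        + T α β φ φ * D α β φ := by
  have h := RingQuot.mkAlgHom_rel K (Rel.ddu (α := α) (β := β) (φ := φ))
  simpa only [map_add, map_mul, map_smul, U, D, T_apply] using h

lemma downUp_key (hβ : β ≠ 0) : ∀ f : F K n,
    (∀ i, ∃ (b : A α β φ) (j : ℕ),
        RingQuot.mkAlgHom K (Rel α β φ) f * D α β φ ^ j = D α β φ ^ i * b) ∧
    (∀ i, ∃ (c : A α β φ) (k : ℕ),
        D α β φ ^ k * RingQuot.mkAlgHom K (Rel α β φ) f = c * D α β φ ^ i) := by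
  intro f
  induction f using FreeAlgebra.induction with
  | grade0 p =>
    have cen : ∀ x : A α β φ, RingQuot.mkAlgHom K (Rel α β φ) (algebraMap _ _ p) * x
        = x * RingQuot.mkAlgHom K (Rel α β φ) (algebraMap _ _ p) := by
      rw [← T_apply]; exact fun x => T_central α β φ p x
    exact ⟨fun i => ⟨_, i, cen _⟩, fun i => ⟨_, i, (cen _).symm⟩⟩
  | grade1 x =>
    cases x with
    | u =>
      exact ore_aux α β hβ (U α β φ) (D α β φ) (T α β φ φ) (relA α β φ)
        (T_central α β φ φ (D α β φ))
    | d =>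
      have hD : ∀ m : ℕ, (D α β φ) * D α β φ ^ m = D α β φ ^ m * D α β φ :=
        fun m => by rw [← pow_succ, ← pow_succ']
      exact ⟨fun i => ⟨D α β φ, i, hD i⟩, fun i => ⟨D α β φ, i, (hD i).symm⟩⟩
  | mul x y hx hy =>
    rw [map_mul]
    constructor
    · intro i
      obtain ⟨b1, j1, h1⟩ := hx.1 i
      obtain ⟨b2, j2, h2⟩ := hy.1 j1
      exact ⟨b1 * b2, j2, by rw [mul_assoc, h2, ← mul_assoc, h1, mul_assoc]⟩
    · intro i
      obtain ⟨c2, k2, h2⟩ := hy.2 i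
      obtain ⟨c1, k1, h1⟩ := hx.2 k2
      exact ⟨c1 * c2, k1, by rw [← mul_assoc, h1, mul_assoc, h2, ← mul_assoc]⟩
  | add x y hx hy =>
    rw [map_add]
    constructor
    · intro i
      obtain ⟨b1, j1, h1⟩ := hx.1 i
      obtain ⟨b2, j2, h2⟩ := hy.1 i
      refine ⟨b1 * D α β φ ^ j2 + b2 * D α β φ ^ j1, j1 + j2, ?_⟩
      rw [add_mul, mul_add]
      congr 1
      · rw [pow_add, ← mul_assoc, h1, mul_assoc]
      · rw [add_comm j1 j2, pow_add, ← mul_assoc, h2, mul_assoc]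
    · intro i
      obtain ⟨c1, k1, h1⟩ := hx.2 i
      obtain ⟨c2, k2, h2⟩ := hy.2 i
      refine ⟨D α β φ ^ k2 * c1 + D α β φ ^ k1 * c2, k1 + k2, ?_⟩
      rw [mul_add, add_mul]
      congr 1
      · rw [add_comm k1 k2, pow_add, mul_assoc, h1, ← mul_assoc]
      · rw [pow_add, mul_assoc, h2, ← mul_assoc]

end DownUpOre
open DownUp in
/-- If β ≠ 0, the multiplicative set {dⁱ : i ≥ 0} is a left and right Ore set
in A(α,β,φ): for every a and i there are b, j with a·dʲ = dⁱ·b (right Ore) and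
c, k with dᵏ·a = c·dⁱ (left Ore). -/
theorem downUp_powers_d_ore {K : Type} [Field K] {n : ℕ}
    (α β : K) (hβ : β ≠ 0) (φ : MvPolynomial (Fin n) K) :
    ∀ (a : A α β φ) (i : ℕ),
      (∃ (b : A α β φ) (j : ℕ), a * D α β φ ^ j = D α β φ ^ i * b) ∧
      (∃ (c : A α β φ) (k : ℕ), D α β φ ^ k * a = c * D α β φ ^ i) := by
  intro a i
  obtain ⟨f, rfl⟩ := RingQuot.mkAlgHom_surjective K (Rel α β φ) a
  exact ⟨(downUp_key α β φ hβ f).1 i, (downUp_key α β φ hβ f).2 i⟩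
end

section
/- Let r, s ∈ K* with r+s = α and rs = −β, and set H = du − r·ud + φ/(s−1), K₀ = du − s·ud + φ/(r−1) (assuming r ≠ 1, s ≠ 1) in the down-up algebra A(α,β,φ). Then dH = sHd, Hu = s·uH, dK₀ = rK₀d, and K₀u = r·uK₀; in particular H and K₀ are normal elements of A(α,β,φ). -/
open MvPolynomial

namespace DownUp

variable {K : Type} [Field K] {n : ℕ} {α β : K} {φ : MvPolynomial (Fin n) K}

lemma T_apply (p : MvPolynomial (Fin n) K) :
    T α β φ p = RingQuot.mkAlgHom K (Rel α β φ) (algebraMap _ _ p) := rfl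

lemma T_central (p : MvPolynomial (Fin n) K) (x : A α β φ) :
    T α β φ p * x = x * T α β φ p := by
  obtain ⟨y, rfl⟩ := RingQuot.mkAlgHom_surjective K (Rel α β φ) x
  rw [T_apply, ← map_mul, ← map_mul, Algebra.commutes]

lemma relA1 :
    D α β φ * D α β φ * U α β φ
      = α • (D α β φ * U α β φ * D α β φ) + β • (U α β φ * D α β φ * D α β φ)
        + T α β φ φ * D α β φ := by
  have h := RingQuot.mkAlgHom_rel K (Rel.ddu (α := α) (β := β) (φ := φ))
  simpa [U, D, T_apply, map_add, map_mul, map_smul] using h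

lemma relA2 :
    D α β φ * U α β φ * U α β φ
      = α • (U α β φ * D α β φ * U α β φ) + β • (U α β φ * U α β φ * D α β φ)
        + U α β φ * T α β φ φ := by
  have h := RingQuot.mkAlgHom_rel K (Rel.duu (α := α) (β := β) (φ := φ))
  simpa [U, D, T_apply, map_add, map_mul, map_smul] using h

lemma key (r s : K) (hα : α = r + s) (hβ : β = -(r * s)) (hs1 : s ≠ 1) :
    (D α β φ * (D α β φ * U α β φ - r • (U α β φ * D α β φ) + (s - 1)⁻¹ • T α β φ φ)
        = s • ((D α β φ * U α β φ - r • (U α β φ * D α β φ) + (s - 1)⁻¹ • T α β φ φ) * D α β φ))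
    ∧ ((D α β φ * U α β φ - r • (U α β φ * D α β φ) + (s - 1)⁻¹ • T α β φ φ) * U α β φ
        = s • (U α β φ * (D α β φ * U α β φ - r • (U α β φ * D α β φ) + (s - 1)⁻¹ • T α β φ φ))) := by
  have hs0 : s - 1 ≠ 0 := sub_ne_zero.mpr hs1
  have h1 : D α β φ * (D α β φ * U α β φ)
      = (r + s) • (D α β φ * (U α β φ * D α β φ)) + (-(r * s)) • (U α β φ * (D α β φ * D α β φ))
        + T α β φ φ * D α β φ := by
    rw [← hα, ← hβ]
    simpa [mul_assoc] using relA1 (α := α) (β := β) (φ := φ)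
  have h2 : D α β φ * U α β φ * U α β φ
      = (r + s) • (U α β φ * (D α β φ * U α β φ)) + (-(r * s)) • (U α β φ * (U α β φ * D α β φ))
        + U α β φ * T α β φ φ := by
    rw [← hα, ← hβ]
    simpa [mul_assoc] using relA2 (α := α) (β := β) (φ := φ)
  have hz : D α β φ * T α β φ φ = T α β φ φ * D α β φ := (T_central φ _).symm
  have hz' : T α β φ φ * U α β φ = U α β φ * T α β φ φ := T_central φ _
  have hsub : ∀ x y : A α β φ, x - y = x + (-1 : K) • y := fun x y => by
    module
  constructor
  · simp only [hsub, smul_smul, mul_add, add_mul, smul_mul_assoc, mul_smul_comm, mul_assoc]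
    rw [h1, hz]
    match_scalars <;> field_simp <;> ring
  · simp only [hsub, smul_smul, mul_add, add_mul, smul_mul_assoc, mul_smul_comm]
    rw [h2, hz']
    simp only [mul_assoc]
    match_scalars <;> field_simp <;> ring

lemma normal_aux (H : A α β φ) (c : K) (hc : c ≠ 0)
    (hd : D α β φ * H = c • (H * D α β φ)) (hu : H * U α β φ = c • (U α β φ * H)) :
    (∀ a : A α β φ, ∃ b, H * a = b * H) ∧ (∀ a : A α β φ, ∃ b, a * H = H * b) := by
  have hD : H * D α β φ = (c⁻¹ • D α β φ) * H := by
    rw [smul_mul_assoc]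
    rw [hd, ← smul_assoc, smul_eq_mul, inv_mul_cancel₀ hc, one_smul]
  have hU : H * U α β φ = (c • U α β φ) * H := by rw [hu, smul_mul_assoc]
  have hD' : D α β φ * H = H * (c • D α β φ) := by rw [mul_smul_comm, ← hd]
  have hU' : U α β φ * H = H * (c⁻¹ • U α β φ) := by
    rw [mul_smul_comm, hu, ← smul_assoc, smul_eq_mul, inv_mul_cancel₀ hc, one_smul]
  constructor
  · intro a
    obtain ⟨f, rfl⟩ := RingQuot.mkAlgHom_surjective K _ a
    induction f using FreeAlgebra.induction with
    | grade0 p => exact ⟨_, (T_central (α := α) (β := β) (φ := φ) p H).symm⟩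
    | grade1 x =>
      cases x with
      | u => exact ⟨c • U α β φ, hU⟩
      | d => exact ⟨c⁻¹ • D α β φ, hD⟩
    | mul x y ihx ihy =>
      obtain ⟨bx, hbx⟩ := ihx
      obtain ⟨by', hby⟩ := ihy
      exact ⟨bx * by', by rw [map_mul, ← mul_assoc, hbx, mul_assoc, hby, mul_assoc]⟩
    | add x y ihx ihy =>
      obtain ⟨bx, hbx⟩ := ihx
      obtain ⟨by', hby⟩ := ihy
      exact ⟨bx + by', by rw [map_add, mul_add, hbx, hby, add_mul]⟩
  · intro a
    obtain ⟨f, rfl⟩ := RingQuot.mkAlgHom_surjective K _ a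
    induction f using FreeAlgebra.induction with
    | grade0 p => exact ⟨_, T_central (α := α) (β := β) (φ := φ) p H⟩
    | grade1 x =>
      cases x with
      | u => exact ⟨c⁻¹ • U α β φ, hU'⟩
      | d => exact ⟨c • D α β φ, hD'⟩
    | mul x y ihx ihy =>
      obtain ⟨bx, hbx⟩ := ihx
      obtain ⟨by', hby⟩ := ihy
      exact ⟨bx * by', by rw [map_mul, mul_assoc, hby, ← mul_assoc, hbx, mul_assoc]⟩
    | add x y ihx ihy =>
      obtain ⟨bx, hbx⟩ := ihx
      obtain ⟨by', hby⟩ := ihy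
      exact ⟨bx + by', by rw [map_add, add_mul, hbx, hby, mul_add]⟩

end DownUp

open DownUp in
/-- With α = r + s, β = −rs (r,s ∈ K*, r ≠ 1 ≠ s), the elements
H = du − r·ud + φ/(s−1) and K₀ = du − s·ud + φ/(r−1) of A(α,β,φ) satisfy
dH = sHd, Hu = s·uH, dK₀ = rK₀d, K₀u = r·uK₀; in particular H and K₀ are
normal elements. -/
theorem downUp_H_K_normal {K : Type} [Field K] [CharZero K] {n : ℕ}
    (r s : K) (hr : r ≠ 0) (hs : s ≠ 0) (hr1 : r ≠ 1) (hs1 : s ≠ 1)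
    (φ : MvPolynomial (Fin n) K) :
    let α := r + s
    let β := -(r * s)
    let H : A α β φ := D α β φ * U α β φ - r • (U α β φ * D α β φ)
      + (s - 1)⁻¹ • T α β φ φ
    let K₀ : A α β φ := D α β φ * U α β φ - s • (U α β φ * D α β φ)
      + (r - 1)⁻¹ • T α β φ φ
    (D α β φ * H = s • (H * D α β φ)) ∧ (H * U α β φ = s • (U α β φ * H)) ∧
    (D α β φ * K₀ = r • (K₀ * D α β φ)) ∧ (K₀ * U α β φ = r • (U α β φ * K₀)) ∧
    (∀ a : A α β φ, ∃ b : A α β φ, H * a = b * H) ∧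
    (∀ a : A α β φ, ∃ b : A α β φ, a * H = H * b) ∧
    (∀ a : A α β φ, ∃ b : A α β φ, K₀ * a = b * K₀) ∧
    (∀ a : A α β φ, ∃ b : A α β φ, a * K₀ = K₀ * b) := by
  intro α β H K₀
  have hα : α = r + s := rfl
  have hα' : α = s + r := add_comm r s
  have hβ : β = -(r * s) := rfl
  have hβ' : β = -(s * r) := by rw [hβ, mul_comm]
  obtain ⟨hH1, hH2⟩ := key (α := α) (β := β) (φ := φ) r s hα hβ hs1
  obtain ⟨hK1, hK2⟩ := key (α := α) (β := β) (φ := φ) s r hα' hβ' hr1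
  refine ⟨hH1, hH2, hK1, hK2, ?_, ?_, ?_, ?_⟩
  · exact (normal_aux H s hs hH1 hH2).1
  · exact (normal_aux H s hs hH1 hH2).2
  · exact (normal_aux K₀ r hr hK1 hK2).1
  · exact (normal_aux K₀ r hr hK1 hK2).2
end
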